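/- Let S(m,n) be the set of n×m matrices Φ with entries in [0,π] whose columns each sum to π, and d_i(Φ) = ∏_{j=1}^m sin(Φ_{ij}). If min_i d_i(Φ) = (sin(π/n))^m for some Φ ∈ S(m,n), then Φ_{ij} = π/n for all i, j. -/

import Mathlib

/-!
By AM–GM and Jensen's inequality for the concave sine, each column product `∏ᵢ sin Φᵢⱼ` is at
most `sin (π / n) ^ n`, and attaining this bound forces equality in Jensen, i.e. a constant
column `π / n`. If every row product is at least `sin (π / n) ^ m`, the product of all `n m`
entries is at least `sin (π / n) ^ (n m)`; since no column product exceeds its bound, every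
column attains it.
-/

open Real Finset Fintype

theorem Finset.eq_of_forall_le_of_pow_card_le_prod {ι R : Type*} [CommSemiring R] [LinearOrder R]
    [IsStrictOrderedRing R] {s : Finset ι} {f : ι → R} {b : R} (hf : ∀ i ∈ s, 0 ≤ f i)
    (hfb : ∀ i ∈ s, f i ≤ b) (h : b ^ #s ≤ ∏ i ∈ s, f i) : ∀ i ∈ s, f i = b := by
  classical
  intro j hj
  refine (hfb j hj).eq_or_lt.resolve_right fun hlt => h.not_gt ?_
  have hb : 0 < b := (hf j hj).trans_lt hlt
  calc ∏ i ∈ s, f i = f j * ∏ i ∈ s.erase j, f i := (mul_prod_erase s f hj).symm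
    _ ≤ f j * b ^ #(s.erase j) := by
      rw [← prod_const]
      exact mul_le_mul_of_nonneg_left
        (prod_le_prod (fun i hi => hf i (mem_of_mem_erase hi))
          fun i hi => hfb i (mem_of_mem_erase hi)) (hf j hj)
    _ < b * b ^ #(s.erase j) := mul_lt_mul_of_pos_right hlt (pow_pos hb _)
    _ = b ^ #s := by rw [← pow_succ', card_erase_add_one hj]

theorem Real.sin_pi_div_natCast_nonneg (n : ℕ) : 0 ≤ sin (π / n) := by
  rcases n.eq_zero_or_pos with rfl | hn
  · simp
  exact sin_nonneg_of_nonneg_of_le_pi (by positivity)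
    (div_le_self pi_pos.le (by exact_mod_cast hn))

section
variable {ι : Type*} [Fintype ι]

theorem Real.prod_le_sum_div_card_pow (z : ι → ℝ) (hz : ∀ i, 0 ≤ z i) :
    ∏ i, z i ≤ ((∑ i, z i) / card ι) ^ card ι := by
  rcases isEmpty_or_nonempty ι with hι | hι
  · simp
  have amgm := geom_mean_le_arith_mean_weighted univ (fun _ => (card ι : ℝ)⁻¹) z
    (fun _ _ => by positivity) (by simp) (fun i _ => hz i)
  calc ∏ i, z i = (∏ i, z i ^ (card ι : ℝ)⁻¹) ^ card ι := by
        rw [← prod_pow]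
        exact prod_congr rfl fun i _ => (rpow_inv_natCast_pow (hz i) card_ne_zero).symm
    _ ≤ (∑ i, (card ι : ℝ)⁻¹ * z i) ^ card ι :=
        pow_le_pow_left₀ (prod_nonneg fun i _ => rpow_nonneg (hz i) _) amgm _
    _ = ((∑ i, z i) / card ι) ^ card ι := by rw [← mul_sum, inv_mul_eq_div]

theorem sum_sin_div_card_le_sin_sum_div_card [Nonempty ι] (x : ι → ℝ)
    (hx : ∀ i, x i ∈ Set.Icc 0 π) :
    (∑ i, sin (x i)) / card ι ≤ sin ((∑ i, x i) / card ι) := by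
  have := strictConcaveOn_sin_Icc.concaveOn.le_map_sum (t := univ)
    (w := fun _ => (card ι : ℝ)⁻¹) (p := x) (fun _ _ => by positivity) (by simp) (fun i _ => hx i)
  simp only [smul_eq_mul] at this
  rwa [← mul_sum, ← mul_sum, inv_mul_eq_div, inv_mul_eq_div] at this

theorem eq_of_sin_sum_div_card_le_sum_sin_div_card (x : ι → ℝ) (hx : ∀ i, x i ∈ Set.Icc 0 π)
    (h : sin ((∑ i, x i) / card ι) ≤ (∑ i, sin (x i)) / card ι) (i j : ι) : x i = x j := by
  have : Nonempty ι := ⟨i⟩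
  refine strictConcaveOn_sin_Icc.eq_of_map_sum_eq (t := univ) (w := fun _ => (card ι : ℝ)⁻¹)
    (fun _ _ => by positivity) (by simp) (fun i _ => hx i) ?_ (mem_univ i) (mem_univ j)
  simp only [smul_eq_mul]
  rwa [← mul_sum, ← mul_sum, inv_mul_eq_div, inv_mul_eq_div]

theorem sum_sin_div_card_nonneg (x : ι → ℝ) (hx : ∀ i, x i ∈ Set.Icc 0 π) :
    0 ≤ (∑ i, sin (x i)) / card ι :=
  div_nonneg (sum_nonneg fun i _ => sin_nonneg_of_mem_Icc (hx i)) (Nat.cast_nonneg _)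

theorem prod_sin_le_sin_pi_div_card_pow [Nonempty ι] (x : ι → ℝ) (hx : ∀ i, x i ∈ Set.Icc 0 π)
    (hs : ∑ i, x i = π) : ∏ i, sin (x i) ≤ sin (π / card ι) ^ card ι :=
  calc ∏ i, sin (x i) ≤ ((∑ i, sin (x i)) / card ι) ^ card ι :=
        prod_le_sum_div_card_pow _ fun i => sin_nonneg_of_mem_Icc (hx i)
    _ ≤ sin (π / card ι) ^ card ι :=
        pow_le_pow_left₀ (sum_sin_div_card_nonneg x hx)
          (hs ▸ sum_sin_div_card_le_sin_sum_div_card x hx) _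

theorem eq_pi_div_card_of_sin_pi_div_card_pow_le_prod_sin (x : ι → ℝ)
    (hx : ∀ i, x i ∈ Set.Icc 0 π) (hs : ∑ i, x i = π)
    (h : sin (π / card ι) ^ card ι ≤ ∏ i, sin (x i)) (i : ι) : x i = π / card ι := by
  have : Nonempty ι := ⟨i⟩
  have hsin : ∀ i, 0 ≤ sin (x i) := fun i => sin_nonneg_of_mem_Icc (hx i)
  have hmean : sin (π / card ι) ≤ (∑ i, sin (x i)) / card ι :=
    (pow_le_pow_iff_left₀ (sin_pi_div_natCast_nonneg _) (sum_sin_div_card_nonneg x hx)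
      card_ne_zero).mp (h.trans (prod_le_sum_div_card_pow _ hsin))
  have hconst := eq_of_sin_sum_div_card_le_sum_sin_div_card x hx (hs ▸ hmean) i
  calc x i = (∑ _j : ι, x i) / card ι := by simp
    _ = π / card ι := by rw [← hs, sum_congr rfl fun j _ => hconst j]

end

theorem min_prod_sin_eq_case_general (n m : ℕ)
    (Φ : Fin n → Fin m → ℝ)
    (hrange : ∀ i j, 0 ≤ Φ i j ∧ Φ i j ≤ π)
    (hsum : ∀ j, ∑ i, Φ i j = π)
    (heq : sInf (Set.range fun i : Fin n => ∏ j, Real.sin (Φ i j)) =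
      Real.sin (π / n) ^ m) :
    ∀ i j, Φ i j = π / n := by
  intro i j
  have : Nonempty (Fin n) := ⟨i⟩
  have hrow : ∀ i, sin (π / n) ^ m ≤ ∏ j, sin (Φ i j) := fun i =>
    heq ▸ csInf_le (Set.finite_range _).bddBelow ⟨i, rfl⟩
  have hcol : ∀ j, ∏ i, sin (Φ i j) ≤ sin (π / n) ^ n := fun j => by
    simpa only [Fintype.card_fin] using
      prod_sin_le_sin_pi_div_card_pow _ (hrange · j) (hsum j)
  have htotal : (sin (π / n) ^ n) ^ #(univ : Finset (Fin m)) ≤ ∏ j, ∏ i, sin (Φ i j) :=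
    calc (sin (π / n) ^ n) ^ #(univ : Finset (Fin m)) = ∏ _i : Fin n, sin (π / n) ^ m := by
          rw [prod_const, Finset.card_fin, Finset.card_fin, ← pow_mul, ← pow_mul, mul_comm]
      _ ≤ ∏ i, ∏ j, sin (Φ i j) :=
          prod_le_prod (fun _ _ => pow_nonneg (sin_pi_div_natCast_nonneg n) m) fun i _ => hrow i
      _ = ∏ j, ∏ i, sin (Φ i j) := prod_comm
  have hcolEq := eq_of_forall_le_of_pow_card_le_prod
    (fun j _ => prod_nonneg fun i _ => sin_nonneg_of_mem_Icc (hrange i j)) (fun j _ => hcol j)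
    htotal j (mem_univ j)
  simpa only [Fintype.card_fin] using eq_pi_div_card_of_sin_pi_div_card_pow_le_prod_sin _
    (hrange · j) (hsum j) (by simpa only [Fintype.card_fin] using hcolEq.ge) i

/-- **Equality case of the sine-product lemma.**
If `Φ` is an `n × m` matrix with entries in `[0, π]` whose columns each sum to
`π`, and `minᵢ ∏ⱼ sin Φᵢⱼ = (sin(π/n))^m`, then every entry equals `π/n`. -/
theorem min_prod_sin_eq_case (n m : ℕ) (hn : 0 < n) (hm : 0 < m)
    (Φ : Fin n → Fin m → ℝ)
    (hrange : ∀ i j, 0 ≤ Φ i j ∧ Φ i j ≤ π)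
    (hsum : ∀ j, ∑ i, Φ i j = π)
    (heq : sInf (Set.range fun i : Fin n => ∏ j, Real.sin (Φ i j)) =
      Real.sin (π / n) ^ m) :
    ∀ i j, Φ i j = π / n :=
  min_prod_sin_eq_case_general n m Φ hrange hsum heq
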